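/- Let E : ℝ^d → ℝ be continuously differentiable, 0 < T < ∞, u⁰ ∈ ℝ^d, and for v ∈ C¹([0,T]; ℝ^d) with v(0) = u⁰ define F(v) = E(v(T)) − E(u⁰) + (1/2) ∫_0^T |v'(t)|² dt + (1/2) ∫_0^T |∇E(v(t))|² dt. Then F(v) ≥ 0 for every such v, and F(v) = 0 if and only if v'(t) + ∇E(v(t)) = 0 for all t ∈ [0,T]. -/

import Mathlib

/-!
Along any curve `v`, the chain rule and the fundamental theorem of calculus give
`E (v T) - E (v 0) = ∫ ⟪∇E(v), v'⟫`. Completing the square then turns `F(v)` into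
`(1/2) ∫ |v' + ∇E(v)|²`, which is nonnegative, and, the integrand being continuous and
nonnegative, vanishes exactly when `v' + ∇E(v) = 0` on `[0, T]`.
-/

open Set InnerProductSpace intervalIntegral
open MeasureTheory (volume)
open scoped Gradient RealInnerProductSpace

theorem intervalIntegral.integral_eq_zero_iff_of_continuousOn_of_nonneg {f : ℝ → ℝ} {a b : ℝ}
    (hab : a < b) (hf : ContinuousOn f (Icc a b)) (hf₀ : ∀ x ∈ Icc a b, 0 ≤ f x) :
    ∫ x in a..b, f x = 0 ↔ ∀ x ∈ Icc a b, f x = 0 := by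
  constructor
  · intro h x hx
    by_contra hfx
    have hpos : 0 < ∫ x in a..b, f x :=
      integral_pos hab hf (fun y hy => hf₀ y (Ioc_subset_Icc_self hy))
        ⟨x, hx, lt_of_le_of_ne (hf₀ x hx) (Ne.symm hfx)⟩
    exact hpos.ne' h
  · intro h
    rw [integral_congr (g := fun _ => 0) (by rwa [uIcc_of_le hab.le]), integral_zero]

variable {F : Type*} [NormedAddCommGroup F] [InnerProductSpace ℝ F] [CompleteSpace F]

theorem ContDiff.continuous_gradient {E : F → ℝ} (hE : ContDiff ℝ 1 E) : Continuous (∇ E) :=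
  (toDual ℝ F).symm.continuous.comp (hE.continuous_fderiv one_ne_zero)

theorem HasGradientAt.comp_hasDerivWithinAt {E : F → ℝ} {g : F} {v : ℝ → F} {v' : F}
    {s : Set ℝ} {t : ℝ} (hE : HasGradientAt E g (v t)) (hv : HasDerivWithinAt v v' s t) :
    HasDerivWithinAt (fun τ => E (v τ)) ⟪g, v'⟫ s t := by
  have h := hE.hasFDerivAt.comp_hasDerivWithinAt t hv
  rw [toDual_apply_apply] at h
  exact h

section Curve

variable {E : F → ℝ} {a b : ℝ} {v v' : ℝ → F}

theorem integral_inner_gradient_eq_sub (hE : ContDiff ℝ 1 E) (hab : a ≤ b)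
    (hv : ∀ t ∈ Icc a b, HasDerivWithinAt v (v' t) (Icc a b) t)
    (hv' : ContinuousOn v' (Icc a b)) :
    ∫ t in a..b, ⟪∇ E (v t), v' t⟫ = E (v b) - E (v a) := by
  have hvc := HasDerivWithinAt.continuousOn hv
  refine integral_eq_sub_of_hasDerivAt_of_le hab (hE.continuous.comp_continuousOn hvc)
    (fun t ht => ?_) ((hE.continuous_gradient.comp_continuousOn hvc).inner hv'
      |>.intervalIntegrable_of_Icc hab)
  exact (((hE.differentiable one_ne_zero) (v t)).hasGradientAt.comp_hasDerivWithinAt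
    (hv t (Ioo_subset_Icc_self ht))).hasDerivAt (Icc_mem_nhds ht.1 ht.2)

theorem energy_dissipation_eq (hE : ContDiff ℝ 1 E) (hab : a ≤ b)
    (hv : ∀ t ∈ Icc a b, HasDerivWithinAt v (v' t) (Icc a b) t)
    (hv' : ContinuousOn v' (Icc a b)) :
    E (v b) - E (v a) + (1 / 2) * (∫ t in a..b, ‖v' t‖ ^ 2)
        + (1 / 2) * (∫ t in a..b, ‖∇ E (v t)‖ ^ 2)
      = (1 / 2) * ∫ t in a..b, ‖v' t + ∇ E (v t)‖ ^ 2 := by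
  have hG := hE.continuous_gradient.comp_continuousOn (HasDerivWithinAt.continuousOn hv)
  have hv'i : IntervalIntegrable (fun t => ‖v' t‖ ^ 2) volume a b :=
    (hv'.norm.pow 2).intervalIntegrable_of_Icc hab
  have hGi : IntervalIntegrable (fun t => ‖∇ E (v t)‖ ^ 2) volume a b :=
    (hG.norm.pow 2).intervalIntegrable_of_Icc hab
  have hIi : IntervalIntegrable (fun t => 2 * ⟪∇ E (v t), v' t⟫) volume a b :=
    ((hG.inner hv').intervalIntegrable_of_Icc hab).const_mul 2
  have hsq : ∫ t in a..b, ‖v' t + ∇ E (v t)‖ ^ 2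
      = (∫ t in a..b, ‖v' t‖ ^ 2) + (∫ t in a..b, ‖∇ E (v t)‖ ^ 2)
        + 2 * ∫ t in a..b, ⟪∇ E (v t), v' t⟫ := by
    rw [← integral_const_mul, ← integral_add hv'i hGi, ← integral_add (hv'i.add hGi) hIi]
    refine integral_congr fun t _ => ?_
    simp only [norm_add_sq_real, real_inner_comm (v' t)]
    ring
  rw [hsq, integral_inner_gradient_eq_sub hE hab hv hv']
  ring

end Curve

theorem de_giorgi_principle (d : ℕ) (T : ℝ) (hT : 0 < T)
    (E : EuclideanSpace ℝ (Fin d) → ℝ) (hE : ContDiff ℝ 1 E)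
    (a : EuclideanSpace ℝ (Fin d))
    (v v' : ℝ → EuclideanSpace ℝ (Fin d))
    (hv1 : ∀ t ∈ Set.Icc (0 : ℝ) T, HasDerivWithinAt v (v' t) (Set.Icc 0 T) t)
    (hv1c : ContinuousOn v' (Set.Icc 0 T))
    (hv0 : v 0 = a) :
    0 ≤ E (v T) - E a + (1 / 2) * (∫ t in (0 : ℝ)..T, ‖v' t‖ ^ 2)
        + (1 / 2) * (∫ t in (0 : ℝ)..T, ‖gradient E (v t)‖ ^ 2)
      ∧ (E (v T) - E a + (1 / 2) * (∫ t in (0 : ℝ)..T, ‖v' t‖ ^ 2)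
            + (1 / 2) * (∫ t in (0 : ℝ)..T, ‖gradient E (v t)‖ ^ 2) = 0
          ↔ ∀ t ∈ Set.Icc (0 : ℝ) T, v' t + gradient E (v t) = 0) := by
  rw [← hv0, energy_dissipation_eq hE hT.le hv1 hv1c]
  have hw : ContinuousOn (fun t => ‖v' t + ∇ E (v t)‖ ^ 2) (Icc 0 T) :=
    (hv1c.add (hE.continuous_gradient.comp_continuousOn
      (HasDerivWithinAt.continuousOn hv1))).norm.pow 2
  have hw₀ : ∀ t ∈ Icc 0 T, 0 ≤ ‖v' t + ∇ E (v t)‖ ^ 2 := fun t _ => by positivity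
  refine ⟨mul_nonneg (by norm_num) (integral_nonneg hT.le hw₀), ?_⟩
  simp only [mul_eq_zero, one_div, inv_eq_zero, OfNat.ofNat_ne_zero, false_or,
    integral_eq_zero_iff_of_continuousOn_of_nonneg hT hw hw₀, pow_eq_zero_iff two_ne_zero,
    norm_eq_zero]
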